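/- (Main correctness theorem for abstract AD) Let V be a type, D a commutative semiring, E₁ and E₂ D-modules, δ₁ : V → E₁ and δ₂ : V → E₂, and h : E₁ →ₗ[D] E₂ a D-linear map with h (δ₁ v) = δ₂ v for all v : V. Let var : V → D, and let φᵢ : MvPolynomial V ℕ →+* TrivSqZeroExt D Eᵢ (for i = 1, 2) be the unique semiring homomorphisms sending X v to (var v, δᵢ v). Then for every polynomial p, the first components of φ₁ p and φ₂ p are equal, and the second component of φ₂ p equals h applied to the second component of φ₁ p. -/

import Mathlib

/-!
The linear map `h` induces the semiring homomorphism `TrivSqZeroExt.map h : D ⋉ E₁ → D ⋉ E₂`,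
which is the identity on first components and `h` on second components. Both `map h ∘ φ₁` and
`φ₂` send `X v` to `(var v, δ₂ v)`, and a semiring homomorphism out of the free commutative
semiring `MvPolynomial V ℕ` is determined by its values on the variables, so they coincide.
-/

open MvPolynomial TrivSqZeroExt

theorem MvPolynomial.ringHom_ext_nat {σ A : Type*} [Semiring A] {f g : MvPolynomial σ ℕ →+* A}
    (hX : ∀ i, f (X i) = g (X i)) : f = g :=
  ringHom_ext' (Subsingleton.elim _ _) hX

theorem abstractAD_correct_general (V : Type*) (D : Type*) [CommSemiring D]
    (E₁ E₂ : Type*)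
    [AddCommMonoid E₁] [Module D E₁] [Module Dᵐᵒᵖ E₁] [IsCentralScalar D E₁]
    [AddCommMonoid E₂] [Module D E₂] [Module Dᵐᵒᵖ E₂] [IsCentralScalar D E₂]
    (δ₁ : V → E₁) (δ₂ : V → E₂) (h : E₁ →ₗ[D] E₂)
    (hδ : ∀ v : V, h (δ₁ v) = δ₂ v)
    (var : V → D)
    (φ₁ : MvPolynomial V ℕ →+* TrivSqZeroExt D E₁)
    (hφ₁ : ∀ v : V,
      (φ₁ (MvPolynomial.X v)).fst = var v ∧ (φ₁ (MvPolynomial.X v)).snd = δ₁ v)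
    (φ₂ : MvPolynomial V ℕ →+* TrivSqZeroExt D E₂)
    (hφ₂ : ∀ v : V,
      (φ₂ (MvPolynomial.X v)).fst = var v ∧ (φ₂ (MvPolynomial.X v)).snd = δ₂ v) :
    ∀ p : MvPolynomial V ℕ,
      (φ₁ p).fst = (φ₂ p).fst ∧ (φ₂ p).snd = h ((φ₁ p).snd) := by
  have hcomp : (map h : TrivSqZeroExt D E₁ →+* TrivSqZeroExt D E₂).comp φ₁ = φ₂ :=
    ringHom_ext_nat fun v => ext
      (by simp [(hφ₁ v).1, (hφ₂ v).1])
      (by simp [(hφ₁ v).2, (hφ₂ v).2, hδ])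
  intro p
  rw [← hcomp]
  exact ⟨(fst_map h (φ₁ p)).symm, snd_map h (φ₁ p)⟩

/-- Main correctness theorem for abstract AD: a Kronecker homomorphism between
tangent modules relates the corresponding instances of the abstract algorithm. -/
theorem abstractAD_correct (V : Type*) (D : Type*) [CommSemiring D]
    (E₁ E₂ : Type*)
    [AddCommMonoid E₁] [Module D E₁] [Module Dᵐᵒᵖ E₁] [IsCentralScalar D E₁]
    [SMulCommClass D Dᵐᵒᵖ E₁]
    [AddCommMonoid E₂] [Module D E₂] [Module Dᵐᵒᵖ E₂] [IsCentralScalar D E₂]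
    [SMulCommClass D Dᵐᵒᵖ E₂]
    (δ₁ : V → E₁) (δ₂ : V → E₂) (h : E₁ →ₗ[D] E₂)
    (hδ : ∀ v : V, h (δ₁ v) = δ₂ v)
    (var : V → D)
    (φ₁ : MvPolynomial V ℕ →+* TrivSqZeroExt D E₁)
    (hφ₁ : ∀ v : V,
      (φ₁ (MvPolynomial.X v)).fst = var v ∧ (φ₁ (MvPolynomial.X v)).snd = δ₁ v)
    (φ₂ : MvPolynomial V ℕ →+* TrivSqZeroExt D E₂)
    (hφ₂ : ∀ v : V,
      (φ₂ (MvPolynomial.X v)).fst = var v ∧ (φ₂ (MvPolynomial.X v)).snd = δ₂ v) :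
    ∀ p : MvPolynomial V ℕ,
      (φ₁ p).fst = (φ₂ p).fst ∧ (φ₂ p).snd = h ((φ₁ p).snd) :=
  abstractAD_correct_general V D E₁ E₂ δ₁ δ₂ h hδ var φ₁ hφ₁ φ₂ hφ₂
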